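/- arXiv:1209.5050 — 6 statements merged into one kernel-verified Lean document; each statement's English description precedes it below -/
import Mathlib

section
/- If T is (n,k)-quasi-*-paranormal and M is a closed T-invariant subspace of H, then the restriction T|_M is (n,k)-quasi-*-paranormal as an operator on M. -/
open ContinuousLinearMap

theorem coe_pow_apply_of_forall_coe_apply {R E : Type*} [Semiring R] [TopologicalSpace E]
    [AddCommMonoid E] [Module R E] {T : E →L[R] E} {M : Submodule R E} {TM : M →L[R] M}
    (hTM : ∀ x : M, (TM x : E) = T x) (m : ℕ) (x : M) :
    ((TM ^ m) x : E) = (T ^ m) x := by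
  induction m generalizing x with
  | zero => rfl
  | succ m ih => rw [pow_succ', pow_succ', mul_apply_eq_comp, mul_apply_eq_comp, hTM, ih]

section RestrictInvariant

variable {𝕜 E : Type*} [RCLike 𝕜] [NormedAddCommGroup E] [InnerProductSpace 𝕜 E]
  {T : E →L[𝕜] E} {M : Submodule 𝕜 E} {TM : M →L[𝕜] M}

-- Dualize `ι ∘ TM = T ∘ ι`: the adjoint of the inclusion `ι : M → E` is the orthogonal projection.
theorem adjoint_apply_of_forall_coe_apply [CompleteSpace E] [CompleteSpace M]
    (hTM : ∀ x : M, (TM x : E) = T x) (y : M) :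
    adjoint TM y = M.orthogonalProjectionOnto (adjoint T y) := by
  have hcomm : M.subtypeL ∘L TM = T ∘L M.subtypeL := ext hTM
  have hdual := congr($(congrArg adjoint hcomm) (y : E))
  simpa only [adjoint_comp, M.adjoint_subtypeL, comp_apply,
    Submodule.orthogonalProjectionOnto_mem_subspace_eq_self] using hdual

theorem norm_adjoint_apply_le_of_forall_coe_apply [CompleteSpace E] [CompleteSpace M]
    (hTM : ∀ x : M, (TM x : E) = T x) (y : M) :
    ‖adjoint TM y‖ ≤ ‖adjoint T y‖ := by
  rw [adjoint_apply_of_forall_coe_apply hTM]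
  exact M.norm_orthogonalProjectionOnto_apply_le _

end RestrictInvariant

theorem stmt_2_general {H : Type*} [NormedAddCommGroup H] [InnerProductSpace ℂ H] [CompleteSpace H]
    (T : H →L[ℂ] H) (n k : ℕ)
    (hT : ∀ x : H, ‖adjoint T (T ^ k <| x)‖ ^ (n + 1) ≤
      ‖T ^ (n + 1) <| T ^ k <| x‖ * ‖T ^ k <| x‖ ^ n)
    (M : Submodule ℂ H) [CompleteSpace M]
    (TM : M →L[ℂ] M) (hTM : ∀ x : M, (TM x : H) = T x) :
    ∀ x : M, ‖adjoint TM (TM ^ k <| x)‖ ^ (n + 1) ≤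
      ‖TM ^ (n + 1) <| TM ^ k <| x‖ * ‖TM ^ k <| x‖ ^ n := by
  intro x
  have hpow := coe_pow_apply_of_forall_coe_apply hTM
  calc ‖adjoint TM ((TM ^ k) x)‖ ^ (n + 1)
      ≤ ‖adjoint T ((T ^ k) (x : H))‖ ^ (n + 1) := by
        gcongr
        simpa only [hpow] using norm_adjoint_apply_le_of_forall_coe_apply hTM ((TM ^ k) x)
    _ ≤ ‖(T ^ (n + 1)) ((T ^ k) (x : H))‖ * ‖(T ^ k) (x : H)‖ ^ n := hT x
    _ = ‖(TM ^ (n + 1)) ((TM ^ k) x)‖ * ‖(TM ^ k) x‖ ^ n := by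
        rw [← Submodule.norm_coe, ← Submodule.norm_coe ((TM ^ k) x), hpow, hpow]

/-- The restriction of an `(n,k)`-quasi-*-paranormal operator to a closed invariant subspace
is again `(n,k)`-quasi-*-paranormal. -/
theorem stmt_2 {H : Type*} [NormedAddCommGroup H] [InnerProductSpace ℂ H] [CompleteSpace H]
    (T : H →L[ℂ] H) (n k : ℕ)
    (hT : ∀ x : H, ‖adjoint T (T ^ k <| x)‖ ^ (n + 1) ≤
      ‖T ^ (n + 1) <| T ^ k <| x‖ * ‖T ^ k <| x‖ ^ n)
    (M : Submodule ℂ H) [CompleteSpace M] (hMinv : ∀ x ∈ M, T x ∈ M)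
    (TM : M →L[ℂ] M) (hTM : ∀ x : M, (TM x : H) = T x) :
    ∀ x : M, ‖adjoint TM (TM ^ k <| x)‖ ^ (n + 1) ≤
      ‖TM ^ (n + 1) <| TM ^ k <| x‖ * ‖TM ^ k <| x‖ ^ n :=
  stmt_2_general T n k hT M TM hTM
end

section
/- A bounded operator T on a complex Hilbert space is (n,k)-quasi-*-paranormal if and only if for all μ > 0, the operator T^{*k}T^{*(1+n)}T^{1+n}T^k − (1+n)μ^n T^{*k}TT^*T^k + nμ^{1+n} T^{*k}T^k is positive (self-adjoint and nonnegative). -/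
/-!
With `y = T^k x`, the quadratic form of the operator at `x` is
`‖T^{n+1} y‖² - (n+1) μ^n ‖T^* y‖² + n μ^{n+1} ‖y‖²`, so everything reduces to the scalars
`A = ‖T^{n+1} y‖²`, `B = ‖T^* y‖²`, `C = ‖y‖²`: paranormality at `x` says `B^{n+1} ≤ A C^n`,
and this holds iff `(n+1) μ^n B ≤ A + n μ^{n+1} C` for every `μ > 0`. One direction is the
weighted AM-GM inequality `(n+1) s t^n ≤ s^{n+1} + n t^{n+1}` at `s = B`, `t = μ C`; for the
other, take `μ = B / C`, where the difference of the two sides is minimal.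
-/

open ContinuousLinearMap

section Scalar

theorem succ_mul_mul_pow_le (n : ℕ) {x y : ℝ} (hx : 0 ≤ x) (hy : 0 ≤ y) :
    (n + 1) * x * y ^ n ≤ x ^ (n + 1) + n * y ^ (n + 1) := by
  rcases hy.eq_or_lt with rfl | hy
  · cases n <;> simp [hx]
  have bernoulli :=
    one_add_mul_le_pow (a := x / y - 1) (by linarith [div_nonneg hx hy.le]) (n + 1)
  rw [add_sub_cancel, div_pow, le_div_iff₀ (by positivity)] at bernoulli
  have expand : (1 + ((n + 1 : ℕ) : ℝ) * (x / y - 1)) * y ^ (n + 1)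
      = (n + 1) * x * y ^ n - n * y ^ (n + 1) := by
    field_simp
    push_cast
    ring
  linarith

theorem pow_succ_le_mul_pow_iff_of_pos (n : ℕ) {A B C : ℝ} (hA : 0 ≤ A) (hB : 0 ≤ B)
    (hC : 0 < C) :
    B ^ (n + 1) ≤ A * C ^ n ↔
      ∀ μ : ℝ, 0 < μ → 0 ≤ A - (n + 1) * μ ^ n * B + n * μ ^ (n + 1) * C := by
  constructor
  · intro h μ hμ
    have young := succ_mul_mul_pow_le n hB (mul_pos hμ hC).le
    rw [mul_pow, mul_pow] at young
    have scaled : 0 ≤ C ^ n * (A - (n + 1) * μ ^ n * B + n * μ ^ (n + 1) * C) :=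
      calc (0 : ℝ) ≤ A * C ^ n - B ^ (n + 1) := sub_nonneg.mpr h
        _ ≤ A * C ^ n - (n + 1) * B * (μ ^ n * C ^ n) + n * (μ ^ (n + 1) * C ^ (n + 1)) := by
          linarith
        _ = _ := by ring
    exact (mul_nonneg_iff_of_pos_left (pow_pos hC n)).mp scaled
  · intro h
    rcases hB.eq_or_lt with rfl | hB
    · rw [zero_pow (Nat.add_one_ne_zero n)]
      positivity
    have scaled := mul_nonneg (pow_pos hC n).le (h (B / C) (div_pos hB hC))
    have expand : C ^ n * (A - (n + 1) * (B / C) ^ n * B + n * (B / C) ^ (n + 1) * C)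
        = A * C ^ n - B ^ (n + 1) := by
      rw [div_pow, div_pow]
      field_simp
      ring
    linarith

theorem pow_succ_le_mul_pow_iff (n : ℕ) {A B C : ℝ} (hA : 0 ≤ A) (hB : 0 ≤ B) (hC : 0 ≤ C) :
    B ^ (n + 1) ≤ A * C ^ n ↔
      ∀ μ : ℝ, 0 < μ → 0 ≤ A - (n + 1) * μ ^ n * B + n * μ ^ (n + 1) * C := by
  rcases hC.lt_or_eq with hC | rfl
  · exact pow_succ_le_mul_pow_iff_of_pos n hA hB hC
  rcases n with _ | n
  · simpa using ⟨fun h _ _ => h, fun h => h 1 one_pos⟩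
  have hB_pow : B ^ (n + 1 + 1) ≤ 0 ↔ B = 0 := by
    rw [← pow_eq_zero_iff (Nat.add_one_ne_zero _)]
    exact ⟨fun h => le_antisymm h (by positivity), fun h => h.le⟩
  rw [zero_pow (Nat.add_one_ne_zero n), mul_zero, hB_pow]
  simp only [mul_zero, add_zero]
  refine ⟨fun hB0 _ _ => by simp [hB0, hA], fun h => ?_⟩
  by_contra hB0
  have hBpos := hB.lt_of_ne' hB0
  -- `μ^(n+1) B` outgrows `A` as `μ → ∞`; `μ = A / B + 1` already suffices.
  have hμ : 1 ≤ A / B + 1 := by linarith [div_nonneg hA hB]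
  have hμB : (A / B + 1) * B = A + B := by field_simp
  have growth := mul_le_mul_of_nonneg_right (le_self_pow₀ hμ (Nat.add_one_ne_zero n)) hB
  have at_μ := h (A / B + 1) (by linarith)
  have hμpow := pow_nonneg (zero_le_one.trans hμ) (n + 1)
  nlinarith [mul_nonneg n.cast_nonneg (mul_nonneg hμpow hB)]

theorem le_rpow_mul_rpow_iff_pow_le (n : ℕ) {a b c : ℝ} (ha : 0 ≤ a) (hb : 0 ≤ b) (hc : 0 ≤ c) :
    b ≤ a ^ ((1 : ℝ) / (n + 1)) * c ^ ((n : ℝ) / (n + 1)) ↔ b ^ (n + 1) ≤ a * c ^ n := by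
  have hroot :
      a ^ ((1 : ℝ) / (n + 1)) * c ^ ((n : ℝ) / (n + 1)) = (a * c ^ n) ^ ((n + 1 : ℝ)⁻¹) := by
    rw [Real.mul_rpow ha (by positivity), ← Real.rpow_natCast c n, ← Real.rpow_mul hc]
    ring_nf
  rw [hroot, Real.le_rpow_inv_iff_of_pos hb (by positivity) (by positivity)]
  norm_cast

theorem le_rpow_mul_rpow_iff_forall (n : ℕ) {a b c : ℝ} (ha : 0 ≤ a) (hb : 0 ≤ b) (hc : 0 ≤ c) :
    b ≤ a ^ ((1 : ℝ) / (n + 1)) * c ^ ((n : ℝ) / (n + 1)) ↔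
      ∀ μ : ℝ, 0 < μ → 0 ≤ a ^ 2 - (n + 1) * μ ^ n * b ^ 2 + n * μ ^ (n + 1) * c ^ 2 := by
  rw [le_rpow_mul_rpow_iff_pow_le n ha hb hc,
    ← pow_succ_le_mul_pow_iff n (sq_nonneg a) (sq_nonneg b) (sq_nonneg c),
    ← pow_le_pow_iff_left₀ (by positivity) (by positivity) two_ne_zero]
  ring_nf

end Scalar

section Operator

theorem inner_adjoint_comp_self_apply {𝕜 E F : Type*} [RCLike 𝕜]
    [NormedAddCommGroup E] [InnerProductSpace 𝕜 E] [CompleteSpace E]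
    [NormedAddCommGroup F] [InnerProductSpace 𝕜 F] [CompleteSpace F] (A : E →L[𝕜] F) (x : E) :
    inner 𝕜 ((adjoint A ∘L A) x) x = (‖A x‖ : 𝕜) ^ 2 := by
  rw [comp_apply, adjoint_inner_left, inner_self_eq_norm_sq_to_K]

variable {H : Type*} [NormedAddCommGroup H] [InnerProductSpace ℂ H]

theorem nonneg_iff_of_inner_eq_ofReal {S : H →L[ℂ] H} {f : H → ℝ}
    (hf : ∀ x, inner ℂ (S x) x = f x) : 0 ≤ S ↔ ∀ x, 0 ≤ f x := by
  simp [nonneg_iff_isPositive, isPositive_iff_complex, hf]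

variable [CompleteSpace H]

noncomputable def quasiStarParanormalOp (T : H →L[ℂ] H) (n k : ℕ) (μ : ℝ) : H →L[ℂ] H :=
  (adjoint T) ^ k * (adjoint T) ^ (n + 1) * T ^ (n + 1) * T ^ k
    - (((n : ℝ) + 1) * μ ^ n) • ((adjoint T) ^ k * T * adjoint T * T ^ k)
    + ((n : ℝ) * μ ^ (n + 1)) • ((adjoint T) ^ k * T ^ k)

theorem inner_quasiStarParanormalOp_apply (T : H →L[ℂ] H) (n k : ℕ) (μ : ℝ) (x : H) :
    inner ℂ (quasiStarParanormalOp T n k μ x) x =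
      ((‖(T ^ (n + 1)) ((T ^ k) x)‖ ^ 2 - (n + 1) * μ ^ n * ‖adjoint T ((T ^ k) x)‖ ^ 2
        + n * μ ^ (n + 1) * ‖(T ^ k) x‖ ^ 2 : ℝ) : ℂ) := by
  have h₁ : (adjoint T) ^ k * (adjoint T) ^ (n + 1) * T ^ (n + 1) * T ^ k
      = adjoint (T ^ (n + 1) * T ^ k) ∘L (T ^ (n + 1) * T ^ k) := by
    simp only [← star_eq_adjoint, star_mul, star_pow, mul_assoc, ← mul_def]
  have h₂ : (adjoint T) ^ k * T * adjoint T * T ^ k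
      = adjoint (adjoint T * T ^ k) ∘L (adjoint T * T ^ k) := by
    simp only [← star_eq_adjoint, star_mul, star_pow, star_star, mul_assoc, ← mul_def]
  have h₃ : (adjoint T) ^ k * T ^ k = adjoint (T ^ k) ∘L T ^ k := by
    rw [← star_eq_adjoint, ← star_pow, star_eq_adjoint, mul_def]
  rw [quasiStarParanormalOp, h₁, h₂, h₃, add_apply, sub_apply, smul_apply, smul_apply,
    inner_add_left, inner_sub_left, ← Complex.coe_smul, ← Complex.coe_smul,
    inner_smul_left, inner_smul_left, inner_adjoint_comp_self_apply,
    inner_adjoint_comp_self_apply, inner_adjoint_comp_self_apply]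
  simp only [RCLike.ofReal_eq_complex_ofReal, Complex.conj_ofReal]
  push_cast [Function.comp_apply]
  ring

end Operator

/-- `T` is `(n,k)`-quasi-*-paranormal iff for all `μ > 0` the operator
`T^{*k} T^{*(1+n)} T^{1+n} T^k − (1+n) μ^n T^{*k} T T^* T^k + n μ^{1+n} T^{*k} T^k`
is positive (here `≥ 0` in the Loewner order on selfadjoint operators). -/
theorem stmt_4 {H : Type*} [NormedAddCommGroup H] [InnerProductSpace ℂ H] [CompleteSpace H]
    (T : H →L[ℂ] H) (n k : ℕ) :
    (∀ x : H, ‖adjoint T (T ^ k <| x)‖ ≤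
        ‖T ^ (n + 1) <| T ^ k <| x‖ ^ ((1 : ℝ) / (n + 1)) * ‖T ^ k <| x‖ ^ ((n : ℝ) / (n + 1)))
      ↔ ∀ μ : ℝ, 0 < μ →
        (0 : H →L[ℂ] H) ≤
          (adjoint T) ^ k * (adjoint T) ^ (n + 1) * T ^ (n + 1) * T ^ k
            - (((n : ℝ) + 1) * μ ^ n) • ((adjoint T) ^ k * T * adjoint T * T ^ k)
            + ((n : ℝ) * μ ^ (n + 1)) • ((adjoint T) ^ k * T ^ k) := by
  change _ ↔ ∀ μ : ℝ, 0 < μ → 0 ≤ quasiStarParanormalOp T n k μ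
  simp only [nonneg_iff_of_inner_eq_ofReal (inner_quasiStarParanormalOp_apply T n k _)]
  refine (forall_congr' fun x => le_rpow_mul_rpow_iff_forall n
    (norm_nonneg _) (norm_nonneg _) (norm_nonneg _)).trans ?_
  exact ⟨fun h μ hμ x => h x μ hμ, fun h x μ hμ => h μ hμ x⟩
end

section
/- Let T be the unilateral weighted right shift on ℓ²(ℕ) with positive bounded weights (w_m), i.e., T e_m = w_m e_{m+1}. Then T is (n,k)-quasi-*-paranormal if and only if for every m ≥ k (with m ≥ 1), w_m^{n+1} ≤ w_{m+1} w_{m+2} ⋯ w_{m+n+1}. -/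
/-!
For `y ∈ ℓ²` the quantities in the inequality are weighted sums of `|y_m|²`:
`‖T^* y‖² = ∑_{m ≥ 1} w_m² |y_m|²` and `‖T^s y‖² = ∑_m (w_{m+1} ⋯ w_{m+s})² |y_m|²`,
while `T^k x` vanishes below index `k`. Testing the inequality on basis vectors gives the weight
condition. Conversely, the weighted power-mean inequality
`(∑ a f)^{n+1} ≤ (∑ a)^n ∑ a f^{n+1}` with `a_m = |y_m|²` and `f_m = w_m²`, combined with
`w_m^{2(n+1)} ≤ (w_{m+1} ⋯ w_{m+n+1})²` on the support of `y = T^k x`, gives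
`‖T^* y‖^{2(n+1)} ≤ ‖y‖^{2n} ‖T^{n+1} y‖²`.
-/

open ContinuousLinearMap
open scoped lp

theorem Finset.sum_mul_pow_succ_le {ι : Type*} (s : Finset ι) (p : ℕ) {a f : ι → ℝ}
    (ha : ∀ i, 0 ≤ a i) (hf : ∀ i, 0 ≤ f i) :
    (∑ i ∈ s, a i * f i) ^ (p + 1) ≤ (∑ i ∈ s, a i) ^ p * ∑ i ∈ s, a i * f i ^ (p + 1) := by
  have hA : 0 ≤ ∑ i ∈ s, a i := Finset.sum_nonneg fun i _ => ha i
  rcases hA.eq_or_lt with hA | hA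
  · have h0 : ∀ i ∈ s, a i = 0 := (Finset.sum_eq_zero_iff_of_nonneg fun i _ => ha i).1 hA.symm
    rw [Finset.sum_eq_zero fun i hi => by rw [h0 i hi, zero_mul], zero_pow p.succ_ne_zero]
    exact mul_nonneg (pow_nonneg hA.le _)
      (Finset.sum_nonneg fun i _ => mul_nonneg (ha i) (pow_nonneg (hf i) _))
  · set A := ∑ i ∈ s, a i
    have jensen := Real.pow_arith_mean_le_arith_mean_pow s (fun i => a i / A) f
      (fun i _ => div_nonneg (ha i) hA.le) (by rw [← Finset.sum_div, div_self hA.ne'])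
      (fun i _ => hf i) (p + 1)
    simp_rw [div_mul_eq_mul_div, ← Finset.sum_div, div_pow] at jensen
    rw [div_le_div_iff₀ (by positivity) hA] at jensen
    refine le_of_mul_le_mul_right ?_ hA
    calc _ ≤ _ := jensen
      _ = _ := by ring

theorem HasSum.pow_succ_le_pow_mul {ι : Type*} (p : ℕ) {a f : ι → ℝ} {A B C : ℝ}
    (ha : ∀ i, 0 ≤ a i) (hf : ∀ i, 0 ≤ f i) (hA : HasSum a A) (hB : HasSum (fun i => a i * f i) B)
    (hC : HasSum (fun i => a i * f i ^ (p + 1)) C) :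
    B ^ (p + 1) ≤ A ^ p * C :=
  le_of_tendsto_of_tendsto' (hB.pow (p + 1)) ((hA.pow p).mul hC)
    fun s => s.sum_mul_pow_succ_le p ha hf

theorem lp.hasSum_norm_sq {α : Type*} {E : α → Type*} [∀ i, NormedAddCommGroup (E i)]
    (f : lp E 2) : HasSum (fun i => ‖f i‖ ^ 2) (‖f‖ ^ 2) := by
  simpa using lp.hasSum_norm (p := 2) (by norm_num) f

section

variable {𝕜 : Type*} [RCLike 𝕜]

theorem lp.apply_eq_inner_single (f : ℓ²(ℕ, 𝕜)) (i : ℕ) :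
    f i = inner 𝕜 (lp.single 2 i 1) f := by
  simp [lp.inner_single_left]

def IsWeightedShift (w : ℕ → ℝ) (T : ℓ²(ℕ, 𝕜) →L[𝕜] ℓ²(ℕ, 𝕜)) : Prop :=
  ∀ m, T (lp.single 2 m 1) = (w (m + 1) : 𝕜) • lp.single 2 (m + 1) 1

namespace IsWeightedShift

variable {w : ℕ → ℝ} {T : ℓ²(ℕ, 𝕜) →L[𝕜] ℓ²(ℕ, 𝕜)}

theorem adjoint_apply (hT : IsWeightedShift w T) (y : ℓ²(ℕ, 𝕜)) (i : ℕ) :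
    adjoint T y i = w (i + 1) * y (i + 1) := by
  rw [lp.apply_eq_inner_single, adjoint_inner_right, hT, inner_smul_left, lp.inner_single_left]
  simp

theorem adjoint_single_succ (hT : IsWeightedShift w T) (m : ℕ) :
    adjoint T (lp.single 2 (m + 1) 1) = (w (m + 1) : 𝕜) • lp.single 2 m 1 := by
  ext i
  rw [hT.adjoint_apply]
  rcases eq_or_ne i m with rfl | h
  · simp [RCLike.real_smul_eq_coe_mul]
  · simp [h]

theorem adjoint_single_zero (hT : IsWeightedShift w T) :
    adjoint T (lp.single 2 0 1) = 0 := by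
  ext i
  rw [hT.adjoint_apply]
  simp [lp.single_apply]

theorem apply_succ (hT : IsWeightedShift w T) (y : ℓ²(ℕ, 𝕜)) (m : ℕ) :
    T y (m + 1) = w (m + 1) * y m := by
  rw [lp.apply_eq_inner_single, ← adjoint_inner_left, hT.adjoint_single_succ, inner_smul_left,
    ← lp.apply_eq_inner_single]
  simp

theorem apply_zero (hT : IsWeightedShift w T) (y : ℓ²(ℕ, 𝕜)) : T y 0 = 0 := by
  rw [lp.apply_eq_inner_single, ← adjoint_inner_left, hT.adjoint_single_zero, inner_zero_left]

theorem pow_apply_of_lt (hT : IsWeightedShift w T) (y : ℓ²(ℕ, 𝕜)) {s m : ℕ} (h : m < s) :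
    (T ^ s) y m = 0 := by
  induction s generalizing m with
  | zero => omega
  | succ s ih =>
    rw [pow_succ', mul_apply_eq_comp]
    cases m with
    | zero => exact hT.apply_zero _
    | succ m => rw [hT.apply_succ, ih (by omega), mul_zero]

theorem pow_apply_add (hT : IsWeightedShift w T) (y : ℓ²(ℕ, 𝕜)) (s m : ℕ) :
    (T ^ s) y (m + s) = (↑(∏ i ∈ Finset.Icc (m + 1) (m + s), w i) : 𝕜) * y m := by
  induction s with
  | zero => simp
  | succ s ih =>
    rw [pow_succ', mul_apply_eq_comp, ← add_assoc, hT.apply_succ, ih,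
      Finset.prod_Icc_succ_top (by omega)]
    push_cast
    ring

theorem pow_single (hT : IsWeightedShift w T) (j s : ℕ) :
    (T ^ s) (lp.single 2 j 1) =
      (↑(∏ i ∈ Finset.Icc (j + 1) (j + s), w i) : 𝕜) • lp.single 2 (j + s) 1 := by
  induction s with
  | zero => simp
  | succ s ih =>
    rw [pow_succ', mul_apply_eq_comp, ih, map_smul, hT, smul_smul, ← add_assoc,
      Finset.prod_Icc_succ_top (by omega)]
    push_cast
    ring_nf

theorem hasSum_norm_adjoint_sq (hT : IsWeightedShift w T) (y : ℓ²(ℕ, 𝕜)) :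
    HasSum (fun i => ‖y (i + 1)‖ ^ 2 * w (i + 1) ^ 2) (‖adjoint T y‖ ^ 2) := by
  convert lp.hasSum_norm_sq (adjoint T y) using 2 with i
  rw [hT.adjoint_apply, norm_mul, RCLike.norm_ofReal, mul_pow, sq_abs, mul_comm]

theorem hasSum_norm_pow_sq (hT : IsWeightedShift w T) (y : ℓ²(ℕ, 𝕜)) (s : ℕ) :
    HasSum (fun m => (∏ i ∈ Finset.Icc (m + 1) (m + s), w i) ^ 2 * ‖y m‖ ^ 2)
      (‖(T ^ s) y‖ ^ 2) := by
  have h := (hasSum_nat_add_iff' s).mpr (lp.hasSum_norm_sq ((T ^ s) y))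
  rw [Finset.sum_eq_zero fun m hm => by
    rw [hT.pow_apply_of_lt y (Finset.mem_range.1 hm), norm_zero, zero_pow two_ne_zero],
    sub_zero] at h
  simpa only [hT.pow_apply_add, norm_mul, RCLike.norm_ofReal, mul_pow, sq_abs] using h

theorem norm_adjoint_pow_succ_le (hT : IsWeightedShift w T) (hw : ∀ m, 1 ≤ m → 0 ≤ w m) (n : ℕ)
    (y : ℓ²(ℕ, 𝕜))
    (hy : ∀ m, 1 ≤ m → y m ≠ 0 → w m ^ (n + 1) ≤ ∏ i ∈ Finset.Icc (m + 1) (m + n + 1), w i) :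
    ‖adjoint T y‖ ^ (n + 1) ≤ ‖(T ^ (n + 1)) y‖ * ‖y‖ ^ n := by
  set g := fun m => (∏ i ∈ Finset.Icc (m + 1) (m + n + 1), w i) ^ 2 * ‖y m‖ ^ 2
  have hg : HasSum g (‖(T ^ (n + 1)) y‖ ^ 2) := hT.hasSum_norm_pow_sq y (n + 1)
  have hg_succ : HasSum (fun i => g (i + 1)) (‖(T ^ (n + 1)) y‖ ^ 2 - g 0) := by
    simpa using (hasSum_nat_add_iff' 1).mpr hg
  have hy_succ : HasSum (fun i => ‖y (i + 1)‖ ^ 2) (‖y‖ ^ 2 - ‖y 0‖ ^ 2) := by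
    simpa using (hasSum_nat_add_iff' 1).mpr (lp.hasSum_norm_sq y)
  have hterm : ∀ i, ‖y (i + 1)‖ ^ 2 * (w (i + 1) ^ 2) ^ (n + 1) ≤ g (i + 1) := by
    intro i
    rcases eq_or_ne (y (i + 1)) 0 with h0 | h0
    · simp [g, h0]
    · rw [← pow_mul, mul_comm 2, pow_mul, mul_comm]
      simp only [g]
      gcongr
      · exact pow_nonneg (hw _ le_add_self) _
      · exact hy _ le_add_self h0
  have hsum : Summable fun i => ‖y (i + 1)‖ ^ 2 * (w (i + 1) ^ 2) ^ (n + 1) :=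
    hg_succ.summable.of_nonneg_of_le (fun i => by positivity) hterm
  have hsq : (‖adjoint T y‖ ^ 2) ^ (n + 1) ≤ (‖y‖ ^ 2) ^ n * ‖(T ^ (n + 1)) y‖ ^ 2 :=
    calc (‖adjoint T y‖ ^ 2) ^ (n + 1)
        ≤ (‖y‖ ^ 2 - ‖y 0‖ ^ 2) ^ n * ∑' i, ‖y (i + 1)‖ ^ 2 * (w (i + 1) ^ 2) ^ (n + 1) :=
          HasSum.pow_succ_le_pow_mul n (fun i => by positivity) (fun i => by positivity) hy_succ
            (hT.hasSum_norm_adjoint_sq y) hsum.hasSum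
      _ ≤ (‖y‖ ^ 2) ^ n * (‖(T ^ (n + 1)) y‖ ^ 2 - g 0) := by
          gcongr
          · exact hy_succ.nonneg fun i => by positivity
          · exact sub_le_self _ (sq_nonneg _)
          · exact hasSum_le hterm hsum.hasSum hg_succ
      _ ≤ (‖y‖ ^ 2) ^ n * ‖(T ^ (n + 1)) y‖ ^ 2 := by
          gcongr
          exact sub_le_self _ (by positivity)
  rw [← pow_le_pow_iff_left₀ (by positivity) (by positivity) two_ne_zero]
  calc _ = (‖adjoint T y‖ ^ 2) ^ (n + 1) := by ring
    _ ≤ _ := hsq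
    _ = _ := by ring

theorem pow_succ_le_prod_of_norm_adjoint_pow_succ_le (hT : IsWeightedShift w T)
    (hw : ∀ m, 1 ≤ m → 0 < w m) {n k : ℕ}
    (h : ∀ x, ‖adjoint T ((T ^ k) x)‖ ^ (n + 1) ≤ ‖(T ^ (n + 1)) ((T ^ k) x)‖ * ‖(T ^ k) x‖ ^ n)
    {m : ℕ} (hkm : k ≤ m) (hm : 1 ≤ m) :
    w m ^ (n + 1) ≤ ∏ i ∈ Finset.Icc (m + 1) (m + n + 1), w i := by
  obtain ⟨j, rfl⟩ := Nat.exists_eq_add_of_le' hkm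
  have hprod : ∀ a b, 1 ≤ a → 0 < ∏ i ∈ Finset.Icc a b, w i := fun a b ha =>
    Finset.prod_pos fun i hi => hw i (ha.trans (Finset.mem_Icc.1 hi).1)
  have hc := hprod (j + 1) (j + k) le_add_self
  have hP := hprod (j + k + 1) (j + k + (n + 1)) le_add_self
  obtain ⟨i, hadj⟩ :
      ∃ i, adjoint T (lp.single 2 (j + k) 1) = (w (j + k) : 𝕜) • lp.single 2 i 1 := by
    obtain ⟨l, hl⟩ := Nat.exists_eq_add_of_le' hm
    exact ⟨l, by rw [hl]; exact hT.adjoint_single_succ l⟩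
  have norm_smul_single (r : ℝ) (i : ℕ) : ‖(r : 𝕜) • (lp.single 2 i 1 : ℓ²(ℕ, 𝕜))‖ = |r| := by
    rw [norm_smul, lp.norm_single (by norm_num), RCLike.norm_ofReal, norm_one, mul_one]
  have hineq := h (lp.single 2 j 1)
  rw [hT.pow_single, map_smul, map_smul, hT.pow_single, hadj, smul_smul, smul_smul,
    ← RCLike.ofReal_mul, ← RCLike.ofReal_mul, norm_smul_single, norm_smul_single,
    norm_smul_single, abs_of_pos hc, abs_of_pos (mul_pos hc hP),
    abs_of_pos (mul_pos hc (hw _ hm))] at hineq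
  refine le_of_mul_le_mul_left ?_ (pow_pos hc (n + 1))
  linear_combination hineq

end IsWeightedShift

end

/-- The paper's basis vector `e_m` (`m ≥ 1`) is `lp.single 2 (m - 1) 1` here, so it still carries
the weight `w m`. -/
theorem stmt_6 (n k : ℕ) (w : ℕ → ℝ) (hw : ∀ m : ℕ, 1 ≤ m → 0 < w m)
    (T : lp (fun _ : ℕ => ℂ) 2 →L[ℂ] lp (fun _ : ℕ => ℂ) 2)
    (hT : ∀ m : ℕ, T (lp.single 2 m (1 : ℂ)) = (w (m + 1) : ℂ) • lp.single 2 (m + 1) (1 : ℂ)) :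
    (∀ x : lp (fun _ : ℕ => ℂ) 2, ‖adjoint T (T ^ k <| x)‖ ^ (n + 1) ≤
        ‖T ^ (n + 1) <| T ^ k <| x‖ * ‖T ^ k <| x‖ ^ n)
      ↔ ∀ m : ℕ, max k 1 ≤ m → w m ^ (n + 1) ≤ ∏ i ∈ Finset.Icc (m + 1) (m + n + 1), w i := by
  have hT' : IsWeightedShift w T := hT
  constructor
  · intro h m hm
    exact hT'.pow_succ_le_prod_of_norm_adjoint_pow_succ_le hw h (le_of_max_le_left hm)
      (le_of_max_le_right hm)
  · intro h x
    refine hT'.norm_adjoint_pow_succ_le (fun m hm => (hw m hm).le) n _ fun m hm hx => h m ?_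
    refine max_le (not_lt.1 fun hmk => hx ?_) hm
    exact hT'.pow_apply_of_lt x hmk
end

section
/- Suppose T ∈ L(H) is (n,k)-quasi-*-paranormal and the range of T^k is not dense. Write T = [[T₁, T₂],[0, T₃]] with respect to the orthogonal decomposition H = closure(T^k H) ⊕ ker(T^{*k}). Then T₁ is n-*-paranormal, T₃^k = 0, and σ(T) = σ(T₁) ∪ {0}. -/
/-!
Since `(T^k H)^⊥ = ker T^{*k}`, the space `N` is `M^⊥`. The defining inequality is a closed
condition, so it extends from `T^k H` to `M`; there `T₁^* = P_M T^*` has smaller norm than `T^*`,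
while the powers of `T₁` are those of `T`, so `T₁` is `n`-*-paranormal. For `y ∈ M^⊥` one has
`T^m y - T₃^m y ∈ M`, and `T^k y ∈ M`, so `T₃^k y ∈ M ∩ M^⊥ = 0`. For the spectrum: when the
corner `z - T₃` is invertible, `z - T` is invertible iff `z - T₁` is, by solving the triangular
system; the nilpotent `T₃` has spectrum in `{0}`, and `0 ∈ σ(T)` as `T^k` is not surjective.
-/

open ContinuousLinearMap

theorem notMem_spectrum_of_isNilpotent {𝕜 A : Type*} [Field 𝕜] [Ring A] [Algebra 𝕜 A]
    {a : A} (ha : IsNilpotent a) {z : 𝕜} (hz : z ≠ 0) : z ∉ spectrum 𝕜 a := by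
  rw [spectrum.notMem_iff, sub_eq_add_neg]
  exact ha.neg.isUnit_add_left_of_commute ((isUnit_iff_ne_zero.mpr hz).map (algebraMap 𝕜 A))
    (Algebra.commutes z (-a)).symm

namespace ContinuousLinearMap

section Normed

variable {E : Type*} [NormedAddCommGroup E] [NormedSpace ℂ E]

theorem coe_pow_apply_of_restrict {M : Submodule ℂ E} {T : E →L[ℂ] E} {T₁ : M →L[ℂ] M}
    (hT₁ : ∀ x : M, (T₁ x : E) = T x) (m : ℕ) (x : M) : ((T₁ ^ m) x : E) = (T ^ m) x := by
  induction m generalizing x with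
  | zero => rfl
  | succ m ih => rw [pow_succ, mul_apply_eq_comp, ih, hT₁, pow_succ, mul_apply_eq_comp]

theorem zero_mem_spectrum_of_closure_range_pow_ne_top [CompleteSpace E] {T : E →L[ℂ] E} {k : ℕ}
    (h : (LinearMap.range ((T ^ k : E →L[ℂ] E) : E →ₗ[ℂ] E)).topologicalClosure ≠ ⊤) :
    0 ∈ spectrum ℂ T := by
  rw [spectrum.zero_mem_iff]
  intro hT
  have hsurj := (isUnit_iff_bijective.mp (hT.pow k)).surjective
  exact h (eq_top_iff.mpr ((LinearMap.range_eq_top.mpr hsurj).ge.trans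
    (Submodule.le_topologicalClosure _)))

end Normed

variable {H : Type*} [NormedAddCommGroup H] [InnerProductSpace ℂ H]

section Compression

variable {M : Submodule ℂ H} {T : H →L[ℂ] H} {T₃ : Mᗮ →L[ℂ] Mᗮ}
  (hT₃ : ∀ y : Mᗮ, T y - T₃ y ∈ M)
include hT₃

theorem pow_apply_sub_compression_pow_apply_mem (hTM : ∀ x ∈ M, T x ∈ M) (m : ℕ) (y : Mᗮ) :
    (T ^ m) y - (T₃ ^ m) y ∈ M := by
  induction m with
  | zero => simp
  | succ m ih =>
    have h : (T ^ (m + 1)) y - (T₃ ^ (m + 1)) y =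
        T ((T ^ m) y - (T₃ ^ m) y) + (T ((T₃ ^ m) y) - T₃ ((T₃ ^ m) y)) := by
      simp only [pow_succ', map_sub]
      abel
    rw [h]
    exact M.add_mem (hTM _ ih) (hT₃ _)

theorem compression_pow_eq_zero (hTM : ∀ x ∈ M, T x ∈ M) {k : ℕ}
    (hk : LinearMap.range ((T ^ k : H →L[ℂ] H) : H →ₗ[ℂ] H) ≤ M) : T₃ ^ k = 0 := by
  ext y
  have hmem : ((T₃ ^ k) y : H) ∈ M := by
    rw [← sub_sub_cancel ((T ^ k) y) ((T₃ ^ k) y : H)]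
    exact M.sub_mem (hk ⟨y, rfl⟩) (pow_apply_sub_compression_pow_apply_mem hT₃ hTM k y)
  simpa using (Submodule.mem_orthogonal' _ _).mp ((T₃ ^ k) y).2 _ hmem

theorem eq_zero_of_apply_mem_of_compression (h₃ : Function.Injective T₃) {y : Mᗮ}
    (hy : T y ∈ M) : y = 0 := by
  have hmem : (T₃ y : H) ∈ M := by simpa using M.sub_mem hy (hT₃ y)
  have h₃y : T₃ y = 0 := by
    ext
    exact inner_self_eq_zero.mp ((T₃ y).2 _ hmem)
  exact h₃ (h₃y.trans (map_zero T₃).symm)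

variable [CompleteSpace M] {T₁ : M →L[ℂ] M} (hT₁ : ∀ x : M, (T₁ x : H) = T x)
include hT₁

theorem bijective_restrict_of_bijective (h₃ : Function.Injective T₃) (h : Function.Bijective T) :
    Function.Bijective T₁ := by
  refine ⟨fun u v huv ↦ Subtype.ext (h.1 (by rw [← hT₁, ← hT₁, huv])), fun m ↦ ?_⟩
  obtain ⟨x, hx⟩ := h.2 m
  obtain ⟨u, hu, v, hv, rfl⟩ := M.exists_add_mem_mem_orthogonal x
  have hv0 : (⟨v, hv⟩ : Mᗮ) = 0 := by
    refine eq_zero_of_apply_mem_of_compression hT₃ h₃ ?_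
    have hTv : T v = m - T₁ ⟨u, hu⟩ := by rw [hT₁, ← hx, map_add, add_sub_cancel_left]
    exact hTv ▸ M.sub_mem m.2 (T₁ _).2
  obtain rfl : v = 0 := congrArg Subtype.val hv0
  exact ⟨⟨u, hu⟩, Subtype.ext (by rw [hT₁, ← hx, add_zero])⟩

theorem bijective_of_bijective_restrict (h₃ : Function.Bijective T₃) (h : Function.Bijective T₁) :
    Function.Bijective T := by
  refine ⟨(injective_iff_map_eq_zero T).mpr fun x hx ↦ ?_, fun y ↦ ?_⟩
  · obtain ⟨u, hu, v, hv, rfl⟩ := M.exists_add_mem_mem_orthogonal x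
    have hv0 : (⟨v, hv⟩ : Mᗮ) = 0 := by
      refine eq_zero_of_apply_mem_of_compression hT₃ h₃.1 ?_
      have hTv : T v = -T₁ ⟨u, hu⟩ := by
        rw [hT₁, eq_neg_iff_add_eq_zero, add_comm, ← map_add, hx]
      exact hTv ▸ M.neg_mem (T₁ _).2
    obtain rfl : v = 0 := congrArg Subtype.val hv0
    have hu0 : T₁ ⟨u, hu⟩ = 0 := Subtype.ext (by simpa [hT₁] using hx)
    simpa using congrArg Subtype.val (h.1 (hu0.trans (map_zero T₁).symm))
  · obtain ⟨a, ha, b, hb, rfl⟩ := M.exists_add_mem_mem_orthogonal y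
    obtain ⟨v, hv⟩ := h₃.2 ⟨b, hb⟩
    have hmem : a + b - T v ∈ M := by
      have h' := M.sub_mem ha (hT₃ v)
      rwa [hv, sub_sub_eq_add_sub] at h'
    obtain ⟨u, hu⟩ := h.2 ⟨_, hmem⟩
    refine ⟨u + v, ?_⟩
    rw [map_add, ← hT₁, hu, sub_add_cancel]

end Compression

variable [CompleteSpace H]

theorem orthogonal_closure_range_pow (T : H →L[ℂ] H) (k : ℕ) :
    (LinearMap.range ((T ^ k : H →L[ℂ] H) : H →ₗ[ℂ] H)).topologicalClosureᗮ =
      LinearMap.ker (((adjoint T) ^ k : H →L[ℂ] H) : H →ₗ[ℂ] H) := by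
  rw [Submodule.orthogonal_closure, orthogonal_range, ← star_eq_adjoint, star_pow,
    star_eq_adjoint]

theorem norm_adjoint_pow_le_of_mem_closure_range {T A : H →L[ℂ] H} {n : ℕ}
    (hT : ∀ x, ‖adjoint T (A x)‖ ^ (n + 1) ≤ ‖(T ^ (n + 1)) (A x)‖ * ‖A x‖ ^ n) {x : H}
    (hx : x ∈ (LinearMap.range (A : H →ₗ[ℂ] H)).topologicalClosure) :
    ‖adjoint T x‖ ^ (n + 1) ≤ ‖(T ^ (n + 1)) x‖ * ‖x‖ ^ n := by
  have hclosed : IsClosed {y : H | ‖adjoint T y‖ ^ (n + 1) ≤ ‖(T ^ (n + 1)) y‖ * ‖y‖ ^ n} :=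
    isClosed_le (by fun_prop) (by fun_prop)
  rw [← SetLike.mem_coe, Submodule.topologicalClosure_coe] at hx
  exact closure_minimal (by rintro _ ⟨y, rfl⟩; exact hT y) hclosed hx

variable {M : Submodule ℂ H} [CompleteSpace M] {T : H →L[ℂ] H} {T₁ : M →L[ℂ] M}
  (hT₁ : ∀ x : M, (T₁ x : H) = T x)
include hT₁

theorem norm_adjoint_apply_le_of_restrict (x : M) : ‖adjoint T₁ x‖ ≤ ‖adjoint T x‖ := by
  have hT₁_eq : T₁ = M.orthogonalProjectionOnto ∘L T ∘L M.subtypeL := by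
    ext x
    simp [← hT₁]
  rw [hT₁_eq, adjoint_comp, adjoint_comp, Submodule.adjoint_subtypeL,
    Submodule.adjoint_orthogonalProjectionOnto]
  exact M.norm_orthogonalProjectionOnto_apply_le _

theorem restrict_starParanormal {n : ℕ}
    (hT : ∀ x ∈ M, ‖adjoint T x‖ ^ (n + 1) ≤ ‖(T ^ (n + 1)) x‖ * ‖x‖ ^ n) (x : M) :
    ‖adjoint T₁ x‖ ^ (n + 1) ≤ ‖(T₁ ^ (n + 1)) x‖ * ‖x‖ ^ n :=
  calc ‖adjoint T₁ x‖ ^ (n + 1) ≤ ‖adjoint T x‖ ^ (n + 1) :=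
        pow_le_pow_left₀ (norm_nonneg _) (norm_adjoint_apply_le_of_restrict hT₁ x) _
    _ ≤ ‖(T ^ (n + 1)) x‖ * ‖(x : H)‖ ^ n := hT x x.2
    _ = ‖(T₁ ^ (n + 1)) x‖ * ‖x‖ ^ n := by
      rw [← coe_pow_apply_of_restrict hT₁, Submodule.norm_coe, Submodule.norm_coe]

theorem mem_spectrum_iff_mem_spectrum_restrict {T₃ : Mᗮ →L[ℂ] Mᗮ}
    (hT₃ : ∀ y : Mᗮ, T y - T₃ y ∈ M) {z : ℂ} (hz : z ∉ spectrum ℂ T₃) :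
    z ∈ spectrum ℂ T ↔ z ∈ spectrum ℂ T₁ := by
  rw [spectrum.notMem_iff, isUnit_iff_bijective] at hz
  simp only [spectrum.mem_iff, isUnit_iff_bijective, not_iff_not]
  have hS₁ : ∀ x : M, ((algebraMap ℂ _ z - T₁) x : H) = (algebraMap ℂ _ z - T) x := by
    simp [hT₁]
  have hS₃ : ∀ y : Mᗮ, (algebraMap ℂ _ z - T) y - (algebraMap ℂ _ z - T₃) y ∈ M := by
    simpa using fun y ↦ M.neg_mem (hT₃ y)
  exact ⟨bijective_restrict_of_bijective hS₃ hS₁ hz.1, bijective_of_bijective_restrict hS₃ hS₁ hz⟩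

end ContinuousLinearMap

theorem stmt_8_general {H : Type*} [NormedAddCommGroup H] [InnerProductSpace ℂ H] [CompleteSpace H]
    (T : H →L[ℂ] H) (n k : ℕ)
    (hT : ∀ x : H, ‖adjoint T (T ^ k <| x)‖ ^ (n + 1) ≤
      ‖T ^ (n + 1) <| T ^ k <| x‖ * ‖T ^ k <| x‖ ^ n)
    (M N : Submodule ℂ H) [CompleteSpace M]
    (hM : M = (LinearMap.range ((T ^ k : H →L[ℂ] H) : H →ₗ[ℂ] H)).topologicalClosure)
    (hN : N = LinearMap.ker (((adjoint T) ^ k : H →L[ℂ] H) : H →ₗ[ℂ] H))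
    (hndense : M ≠ ⊤)
    (T₁ : M →L[ℂ] M) (hT₁ : ∀ x : M, (T₁ x : H) = T x)
    (T₃ : N →L[ℂ] N) (hT₃ : ∀ y : N, T y - (T₃ y : H) ∈ M) :
    (∀ x : M, ‖adjoint T₁ x‖ ^ (n + 1) ≤ ‖T₁ ^ (n + 1) <| x‖ * ‖x‖ ^ n)
      ∧ T₃ ^ k = 0 ∧ spectrum ℂ T = spectrum ℂ T₁ ∪ {0} := by
  obtain rfl : N = Mᗮ := by rw [hN, hM, orthogonal_closure_range_pow]
  have hTM : ∀ x ∈ M, T x ∈ M := fun x hx ↦ hT₁ ⟨x, hx⟩ ▸ (T₁ ⟨x, hx⟩).2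
  have hT₃k : T₃ ^ k = 0 :=
    compression_pow_eq_zero hT₃ hTM (hM ▸ Submodule.le_topologicalClosure _)
  refine ⟨restrict_starParanormal hT₁ fun x hx ↦
    norm_adjoint_pow_le_of_mem_closure_range hT (hM ▸ hx), hT₃k, ?_⟩
  have h0 : (0 : ℂ) ∈ spectrum ℂ T :=
    zero_mem_spectrum_of_closure_range_pow_ne_top (hM ▸ hndense)
  ext z
  rcases eq_or_ne z 0 with rfl | hz
  · simp [h0]
  · simp [hz, mem_spectrum_iff_mem_spectrum_restrict hT₁ hT₃
      (notMem_spectrum_of_isNilpotent ⟨k, hT₃k⟩ hz)]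

/-- Suppose `T` is `(n,k)`-quasi-*-paranormal and the range of `T^k` is not dense. With respect
to `H = closure(T^k H) ⊕ ker(T^{*k})`, write `T = [[T₁, T₂],[0, T₃]]`, i.e. `T₁` is the
restriction of `T` to `M = closure(T^k H)` and `T₃` is the compression of `T` to
`N = ker(T^{*k}) = M^⊥`. Then `T₁` is `n`-*-paranormal, `T₃^k = 0` and
`σ(T) = σ(T₁) ∪ {0}`. -/
theorem stmt_8 {H : Type*} [NormedAddCommGroup H] [InnerProductSpace ℂ H] [CompleteSpace H]
    (T : H →L[ℂ] H) (n k : ℕ) (hk : 1 ≤ k)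
    (hT : ∀ x : H, ‖adjoint T (T ^ k <| x)‖ ^ (n + 1) ≤
      ‖T ^ (n + 1) <| T ^ k <| x‖ * ‖T ^ k <| x‖ ^ n)
    (M N : Submodule ℂ H) [CompleteSpace M] [CompleteSpace N]
    (hM : M = (LinearMap.range ((T ^ k : H →L[ℂ] H) : H →ₗ[ℂ] H)).topologicalClosure)
    (hN : N = LinearMap.ker (((adjoint T) ^ k : H →L[ℂ] H) : H →ₗ[ℂ] H))
    (hndense : M ≠ ⊤)
    (T₁ : M →L[ℂ] M) (hT₁ : ∀ x : M, (T₁ x : H) = T x)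
    (T₃ : N →L[ℂ] N) (hT₃ : ∀ y : N, T y - (T₃ y : H) ∈ M) :
    (∀ x : M, ‖adjoint T₁ x‖ ^ (n + 1) ≤ ‖T₁ ^ (n + 1) <| x‖ * ‖x‖ ^ n)
      ∧ T₃ ^ k = 0 ∧ spectrum ℂ T = spectrum ℂ T₁ ∪ {0} :=
  stmt_8_general T n k hT M N hM hN hndense T₁ hT₁ T₃ hT₃
end

section
/- Let A ∈ L(H) be n-*-paranormal and surjective, C ∈ L(K) with C^k = 0, and B ∈ L(K, H). Then the operator matrix T = [[A, B],[0, C]] on H ⊕ K is similar to an (n,k)-quasi-*-paranormal operator; in fact T is similar to A ⊕ C, and A ⊕ C is (n,k)-quasi-*-paranormal. -/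
/-!
Since `A` is surjective it has a bounded right inverse `N` (invert `A` on `(ker A)ᗮ`), and since
`C` is nilpotent the finite sum `X = ∑_{j<k} N^(j+1) B C^j` solves `A X - X C = B` by
telescoping. The shear `(x, y) ↦ (x + X y, y)` then intertwines `T` with `R = A ⊕ C`.
Finally `R^k (x, y) = (A^k x, 0)`, and on vectors `(u, 0)` the *-paranormality inequality for `R`
is the one for `A` at `u`, because `R^*` and the powers of `R` act diagonally.
-/

open ContinuousLinearMap

namespace ContinuousLinearMap

section Sylvester

variable {R M N : Type*} [Semiring R] [TopologicalSpace M] [AddCommMonoid M] [Module R M]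
  [ContinuousAdd M] [TopologicalSpace N] [AddCommMonoid N] [Module R N]

theorem exists_comp_eq_add_comp_of_pow_eq_zero {A : M →L[R] M} (hA : A.HasRightInverse)
    (B : N →L[R] M) {C : N →L[R] N} {k : ℕ} (hC : C ^ k = 0) :
    ∃ X : N →L[R] M, A ∘L X = B + X ∘L C := by
  obtain ⟨G, hG⟩ := hA
  have hAG : A ∘L G = .id R M := ext hG
  set f : ℕ → N →L[R] M := fun j => (G ^ j) ∘L B ∘L (C ^ j) with hf
  have hf_succ : ∀ j, (G ∘L f j) ∘L C = f (j + 1) := fun j => by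
    simp only [hf, pow_succ' G, pow_succ C, mul_def, comp_assoc]
  have hf_zero : f 0 = B := by simp only [hf, pow_zero, one_def, id_comp, comp_id]
  have hf_k : f k = 0 := by simp only [hf, hC, comp_zero]
  refine ⟨∑ j ∈ Finset.range k, G ∘L f j, ?_⟩
  calc A ∘L ∑ j ∈ Finset.range k, G ∘L f j = ∑ j ∈ Finset.range k, f j := by
        simp only [comp_finsetSum, ← comp_assoc, hAG, id_comp]
    _ = f 0 + ∑ j ∈ Finset.range k, f (j + 1) := by
        rw [← add_zero (∑ j ∈ _, f j), ← hf_k, ← Finset.sum_range_succ, Finset.sum_range_succ',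
          add_comm]
    _ = B + (∑ j ∈ Finset.range k, G ∘L f j) ∘L C := by
        simp only [finsetSum_comp, hf_succ, hf_zero]

end Sylvester

section ProdLp

variable {𝕜 E F : Type*} [Semiring 𝕜] [TopologicalSpace E] [AddCommGroup E] [Module 𝕜 E]
  [TopologicalSpace F] [AddCommGroup F] [Module 𝕜 F] {p : ENNReal}

theorem exists_conj_eq_of_comp_eq_add_comp [IsTopologicalAddGroup E] {A : E →L[𝕜] E}
    {B : F →L[𝕜] E} {C : F →L[𝕜] F} {X : F →L[𝕜] E} (hX : A ∘L X = B + X ∘L C)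
    {T R : WithLp p (E × F) →L[𝕜] WithLp p (E × F)}
    (hT : ∀ z, T z = WithLp.toLp p (A z.fst + B z.snd, C z.snd))
    (hR : ∀ z, R z = WithLp.toLp p (A z.fst, C z.snd)) :
    ∃ S : WithLp p (E × F) ≃L[𝕜] WithLp p (E × F), ∀ z, S (T z) = R (S z) := by
  let L := WithLp.prodContinuousLinearEquiv p 𝕜 E F
  let shear : (E × F) ≃L[𝕜] E × F := (ContinuousLinearEquiv.prodComm 𝕜 E F).trans
    (((ContinuousLinearEquiv.refl 𝕜 F).skewProd (.refl 𝕜 E) X).trans (.prodComm 𝕜 F E))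
  refine ⟨L.trans (shear.trans L.symm), fun z => ?_⟩
  have hXz : A (X z.snd) = B z.snd + X (C z.snd) := congrArg (· z.snd) hX
  simp only [L, shear, hT, hR, ContinuousLinearEquiv.trans_apply,
    WithLp.prodContinuousLinearEquiv_apply, WithLp.prodContinuousLinearEquiv_symm_apply,
    ContinuousLinearEquiv.prodComm_apply, ContinuousLinearEquiv.skewProd_apply,
    ContinuousLinearEquiv.refl_apply, Prod.swap_prod_mk, Prod.fst_swap, Prod.snd_swap,
    WithLp.ofLp_fst, WithLp.ofLp_snd, WithLp.toLp_fst, WithLp.toLp_snd, map_add, hXz, add_assoc]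

theorem pow_apply_of_forall_apply_eq_toLp {A : E →L[𝕜] E} {C : F →L[𝕜] F}
    {R : WithLp p (E × F) →L[𝕜] WithLp p (E × F)}
    (hR : ∀ z, R z = WithLp.toLp p (A z.fst, C z.snd)) (m : ℕ) (z : WithLp p (E × F)) :
    (R ^ m) z = WithLp.toLp p ((A ^ m) z.fst, (C ^ m) z.snd) := by
  induction m with
  | zero => rfl
  | succ m ih =>
    simp only [pow_succ', mul_apply_eq_comp, ih, hR, WithLp.toLp_fst, WithLp.toLp_snd]

end ProdLp

theorem hasRightInverse_of_surjective {𝕜 E F : Type*} [RCLike 𝕜] [NormedAddCommGroup E]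
    [InnerProductSpace 𝕜 E] [CompleteSpace E] [NormedAddCommGroup F] [NormedSpace 𝕜 F]
    [CompleteSpace F] {A : E →L[𝕜] F} (hA : Function.Surjective A) : A.HasRightInverse := by
  let P := A.ker.orthogonalProjectionOnto
  have hP : Function.Surjective P := fun v =>
    ⟨v, A.ker.orthogonalProjectionOnto_mem_subspace_eq_self v⟩
  let e := A.equivProdOfSurjectiveOfIsCompl P (LinearMap.range_eq_top.2 hA)
    (LinearMap.range_eq_top.2 hP) (by
      rw [Submodule.ker_orthogonalProjectionOnto]
      exact Submodule.isCompl_orthogonal _)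
  exact ⟨(e.symm : F × A.ker →L[𝕜] E) ∘L inl 𝕜 F A.ker,
    fun y => congrArg Prod.fst (e.apply_symm_apply (y, 0))⟩

section Hilbert

variable {𝕜 H K : Type*} [RCLike 𝕜] [NormedAddCommGroup H] [InnerProductSpace 𝕜 H]
  [CompleteSpace H] [NormedAddCommGroup K] [InnerProductSpace 𝕜 K] [CompleteSpace K]

theorem adjoint_apply_of_forall_apply_eq_toLp {A : H →L[𝕜] H} {C : K →L[𝕜] K}
    {R : WithLp 2 (H × K) →L[𝕜] WithLp 2 (H × K)}
    (hR : ∀ z, R z = WithLp.toLp 2 (A z.fst, C z.snd)) (z : WithLp 2 (H × K)) :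
    adjoint R z = WithLp.toLp 2 (adjoint A z.fst, adjoint C z.snd) := by
  let L := WithLp.prodContinuousLinearEquiv 2 𝕜 H K
  have h : (L.symm : H × K →L[𝕜] _) ∘L (adjoint A).prodMap (adjoint C) ∘L (L : _ →L[𝕜] H × K)
      = adjoint R := by
    rw [eq_adjoint_iff]
    intro u v
    simp [L, hR, WithLp.prod_inner_apply, adjoint_inner_left]
  exact congrArg (· z) h.symm

variable (n : ℕ)

def StarParanormalAt (T : H →L[𝕜] H) (x : H) : Prop :=
  ‖adjoint T x‖ ^ (n + 1) ≤ ‖(T ^ (n + 1)) x‖ * ‖x‖ ^ n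

def IsStarParanormal (T : H →L[𝕜] H) : Prop :=
  ∀ x, StarParanormalAt n T x

def IsQuasiStarParanormal (k : ℕ) (T : H →L[𝕜] H) : Prop :=
  ∀ x, StarParanormalAt n T ((T ^ k) x)

variable {n}

theorem starParanormalAt_toLp_zero_iff {A : H →L[𝕜] H} {C : K →L[𝕜] K}
    {R : WithLp 2 (H × K) →L[𝕜] WithLp 2 (H × K)}
    (hR : ∀ z, R z = WithLp.toLp 2 (A z.fst, C z.snd)) (x : H) :
    StarParanormalAt n R (WithLp.toLp 2 (x, 0)) ↔ StarParanormalAt n A x := by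
  simp only [StarParanormalAt, adjoint_apply_of_forall_apply_eq_toLp hR,
    pow_apply_of_forall_apply_eq_toLp hR, WithLp.toLp_fst, WithLp.toLp_snd, map_zero,
    WithLp.norm_toLp_fst]

theorem IsStarParanormal.isQuasiStarParanormal_of_forall_apply_eq_toLp {A : H →L[𝕜] H}
    (hA : IsStarParanormal n A) {C : K →L[𝕜] K} {k : ℕ} (hC : C ^ k = 0)
    {R : WithLp 2 (H × K) →L[𝕜] WithLp 2 (H × K)}
    (hR : ∀ z, R z = WithLp.toLp 2 (A z.fst, C z.snd)) :
    IsQuasiStarParanormal n k R := fun z => by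
  rw [pow_apply_of_forall_apply_eq_toLp hR, hC, zero_apply, starParanormalAt_toLp_zero_iff hR]
  exact hA _

end Hilbert

end ContinuousLinearMap

theorem stmt_9_general {H K : Type*} [NormedAddCommGroup H] [InnerProductSpace ℂ H] [CompleteSpace H]
    [NormedAddCommGroup K] [InnerProductSpace ℂ K] [CompleteSpace K]
    (A : H →L[ℂ] H) (B : K →L[ℂ] H) (C : K →L[ℂ] K) (n k : ℕ)
    (hA : ∀ x : H, ‖adjoint A x‖ ^ (n + 1) ≤ ‖A ^ (n + 1) <| x‖ * ‖x‖ ^ n)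
    (hAsurj : Function.Surjective A) (hC : C ^ k = 0)
    (T R : WithLp 2 (H × K) →L[ℂ] WithLp 2 (H × K))
    (hT : ∀ z : WithLp 2 (H × K), T z = (WithLp.equiv 2 (H × K)).symm
      (A (WithLp.equiv 2 (H × K) z).1 + B (WithLp.equiv 2 (H × K) z).2,
        C (WithLp.equiv 2 (H × K) z).2))
    (hR : ∀ z : WithLp 2 (H × K), R z = (WithLp.equiv 2 (H × K)).symm
      (A (WithLp.equiv 2 (H × K) z).1, C (WithLp.equiv 2 (H × K) z).2)) :
    (∃ S : WithLp 2 (H × K) ≃L[ℂ] WithLp 2 (H × K), ∀ z, S (T z) = R (S z))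
      ∧ ∀ z : WithLp 2 (H × K), ‖adjoint R (R ^ k <| z)‖ ^ (n + 1) ≤
          ‖R ^ (n + 1) <| R ^ k <| z‖ * ‖R ^ k <| z‖ ^ n := by
  obtain ⟨X, hX⟩ :=
    exists_comp_eq_add_comp_of_pow_eq_zero (hasRightInverse_of_surjective hAsurj) B hC
  exact ⟨exists_conj_eq_of_comp_eq_add_comp hX hT hR,
    IsStarParanormal.isQuasiStarParanormal_of_forall_apply_eq_toLp hA hC hR⟩

/-- If `A` is `n`-*-paranormal and surjective, `C^k = 0`, and `T = [[A, B],[0, C]]` on the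
Hilbert space `H ⊕ K`, then `T` is similar to the direct sum `R = A ⊕ C`, and `R` is
`(n,k)`-quasi-*-paranormal; hence `T` is similar to an `(n,k)`-quasi-*-paranormal operator. -/
theorem stmt_9 {H K : Type*} [NormedAddCommGroup H] [InnerProductSpace ℂ H] [CompleteSpace H]
    [NormedAddCommGroup K] [InnerProductSpace ℂ K] [CompleteSpace K]
    (A : H →L[ℂ] H) (B : K →L[ℂ] H) (C : K →L[ℂ] K) (n k : ℕ) (hk : 1 ≤ k)
    (hA : ∀ x : H, ‖adjoint A x‖ ^ (n + 1) ≤ ‖A ^ (n + 1) <| x‖ * ‖x‖ ^ n)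
    (hAsurj : Function.Surjective A) (hC : C ^ k = 0)
    (T R : WithLp 2 (H × K) →L[ℂ] WithLp 2 (H × K))
    (hT : ∀ z : WithLp 2 (H × K), T z = (WithLp.equiv 2 (H × K)).symm
      (A (WithLp.equiv 2 (H × K) z).1 + B (WithLp.equiv 2 (H × K) z).2,
        C (WithLp.equiv 2 (H × K) z).2))
    (hR : ∀ z : WithLp 2 (H × K), R z = (WithLp.equiv 2 (H × K)).symm
      (A (WithLp.equiv 2 (H × K) z).1, C (WithLp.equiv 2 (H × K) z).2)) :
    (∃ S : WithLp 2 (H × K) ≃L[ℂ] WithLp 2 (H × K), ∀ z, S (T z) = R (S z))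
      ∧ ∀ z : WithLp 2 (H × K), ‖adjoint R (R ^ k <| z)‖ ^ (n + 1) ≤
          ‖R ^ (n + 1) <| R ^ k <| z‖ * ‖R ^ k <| z‖ ^ n :=
  stmt_9_general A B C n k hA hAsurj hC T R hT hR
end

section
/- If A is n-*-paranormal on H, C ∈ L(K) satisfies C^k = 0, then the direct sum R = A ⊕ C on H ⊕ K is (n,k)-quasi-*-paranormal. -/
/-! `R ^ k` maps every vector into `H ⊕ 0`, where `R ^ (n + 1)` and `R†` act as `A ^ (n + 1)` and
`A†` without changing norms; the inequality is then `n`-*-paranormality of `A` at the first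
component. -/

open ContinuousLinearMap

namespace WithLp

section Pow

variable {𝕜 E F : Type*} [Semiring 𝕜] [SeminormedAddCommGroup E] [Module 𝕜 E]
  [SeminormedAddCommGroup F] [Module 𝕜 F]
  {A : E →L[𝕜] E} {C : F →L[𝕜] F} {T : WithLp 2 (E × F) →L[𝕜] WithLp 2 (E × F)}

theorem pow_apply_of_apply_eq_prodMap (hT : ∀ z, T z = toLp 2 (A z.fst, C z.snd)) (m : ℕ)
    (z : WithLp 2 (E × F)) : (T ^ m) z = toLp 2 ((A ^ m) z.fst, (C ^ m) z.snd) := by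
  induction m generalizing z with
  | zero => rfl
  | succ m ih => rw [pow_succ, mul_apply_eq_comp, ih, hT]; rfl

end Pow

section Adjoint

variable {𝕜 E F : Type*} [RCLike 𝕜] [NormedAddCommGroup E] [InnerProductSpace 𝕜 E] [CompleteSpace E]
  [NormedAddCommGroup F] [InnerProductSpace 𝕜 F] [CompleteSpace F]
  {A : E →L[𝕜] E} {C : F →L[𝕜] F} {T : WithLp 2 (E × F) →L[𝕜] WithLp 2 (E × F)}

theorem adjoint_apply_of_apply_eq_prodMap (hT : ∀ z, T z = toLp 2 (A z.fst, C z.snd))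
    (w : WithLp 2 (E × F)) : adjoint T w = toLp 2 (adjoint A w.fst, adjoint C w.snd) := by
  refine ext_inner_right 𝕜 fun v => ?_
  rw [adjoint_inner_left, prod_inner_apply, prod_inner_apply, hT]
  simp only [ofLp_fst, ofLp_snd, adjoint_inner_left]

end Adjoint

end WithLp

theorem stmt_10_general {H K : Type*} [NormedAddCommGroup H] [InnerProductSpace ℂ H] [CompleteSpace H]
    [NormedAddCommGroup K] [InnerProductSpace ℂ K] [CompleteSpace K]
    (A : H →L[ℂ] H) (C : K →L[ℂ] K) (n k : ℕ)
    (hA : ∀ x : H, ‖adjoint A x‖ ^ (n + 1) ≤ ‖A ^ (n + 1) <| x‖ * ‖x‖ ^ n)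
    (hC : C ^ k = 0)
    (R : WithLp 2 (H × K) →L[ℂ] WithLp 2 (H × K))
    (hR : ∀ z : WithLp 2 (H × K), R z = (WithLp.equiv 2 (H × K)).symm
      (A (WithLp.equiv 2 (H × K) z).1, C (WithLp.equiv 2 (H × K) z).2)) :
    ∀ z : WithLp 2 (H × K), ‖adjoint R (R ^ k <| z)‖ ^ (n + 1) ≤
      ‖R ^ (n + 1) <| R ^ k <| z‖ * ‖R ^ k <| z‖ ^ n := by
  intro z
  have hRk : (R ^ k) z = WithLp.toLp 2 ((A ^ k) z.fst, 0) := by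
    rw [WithLp.pow_apply_of_apply_eq_prodMap hR, hC, zero_apply]
  rw [hRk, WithLp.adjoint_apply_of_apply_eq_prodMap hR, WithLp.pow_apply_of_apply_eq_prodMap hR]
  simpa only [WithLp.toLp_fst, WithLp.toLp_snd, map_zero, WithLp.norm_toLp_fst] using hA _

/-- If `A` is `n`-*-paranormal on `H` and `C^k = 0` on `K` (with `k ≥ 1`), then the direct sum
`R = A ⊕ C` on the Hilbert space `H ⊕ K` is `(n,k)`-quasi-*-paranormal. -/
theorem stmt_10 {H K : Type*} [NormedAddCommGroup H] [InnerProductSpace ℂ H] [CompleteSpace H]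
    [NormedAddCommGroup K] [InnerProductSpace ℂ K] [CompleteSpace K]
    (A : H →L[ℂ] H) (C : K →L[ℂ] K) (n k : ℕ) (hk : 1 ≤ k)
    (hA : ∀ x : H, ‖adjoint A x‖ ^ (n + 1) ≤ ‖A ^ (n + 1) <| x‖ * ‖x‖ ^ n)
    (hC : C ^ k = 0)
    (R : WithLp 2 (H × K) →L[ℂ] WithLp 2 (H × K))
    (hR : ∀ z : WithLp 2 (H × K), R z = (WithLp.equiv 2 (H × K)).symm
      (A (WithLp.equiv 2 (H × K) z).1, C (WithLp.equiv 2 (H × K) z).2)) :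
    ∀ z : WithLp 2 (H × K), ‖adjoint R (R ^ k <| z)‖ ^ (n + 1) ≤
      ‖R ^ (n + 1) <| R ^ k <| z‖ * ‖R ^ k <| z‖ ^ n :=
  stmt_10_general A C n k hA hC R hR
end
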